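/- Let p > 2 and let W, ρ : ℝ → ℝ be bounded measurable functions with ρ(x) ≥ 0 for almost every x. Let λ ∈ ℝ and let u : ℝ → ℝ be continuously differentiable with locally Lipschitz derivative, with u and u′ square-integrable on ℝ, satisfying −u″(x) + W(x)·u(x) + λ·u(x) = ρ(x)·|u(x)|^{p−2}·u(x) for almost every x ∈ ℝ. If u has finite Morse index, then λ ≥ −L⁺ and λ ≥ −L⁻, where L⁺ (respectively L⁻) denotes the essential limsup of W(x) as x → +∞ (respectively x → −∞). -/

import Mathlib

/-!
If `λ < -L⁺`, then `W + λ ≤ -δ < 0` almost everywhere on a half-line. There a tent function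
`φ` of radius `r` has `∫ φ'² ≤ 2 / r` and `∫ φ² ≥ r / 4`, while the nonlinear term of the
quadratic form is nonpositive since `ρ ≥ 0`; so `Q_u(φ) < 0` once `δ r² > 8`. Tents with
pairwise disjoint supports do not interact in `Q_u`, hence any number of them spans a space
on which `Q_u` is negative definite, and the Morse index of `u` is infinite.
-/

open MeasureTheory Set Filter

def IsTestFun (φ : ℝ → ℝ) : Prop :=
  (∃ K, LipschitzWith K φ) ∧ HasCompactSupport φ

/-- The quadratic form associated to the linearization of
`−u″ + W u + λ u = ρ |u|^{p−2} u` at the solution `u`. -/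
noncomputable def quadForm (p lam : ℝ) (W ρ u φ : ℝ → ℝ) : ℝ :=
  ∫ x : ℝ, ((deriv φ x) ^ 2 + (W x + lam) * (φ x) ^ 2
    - (p - 1) * ρ x * |u x| ^ (p - 2) * (φ x) ^ 2)

def MorseIndexGE (p lam : ℝ) (W ρ u : ℝ → ℝ) (m : ℕ) : Prop :=
  ∃ φ : Fin m → ℝ → ℝ, (∀ i, IsTestFun (φ i)) ∧ LinearIndependent ℝ φ ∧
    ∀ c : Fin m → ℝ, (∑ i, c i • φ i) ≠ 0 →
      quadForm p lam W ρ u (∑ i, c i • φ i) < 0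

open Function Topology

namespace IsTestFun

variable {φ : ℝ → ℝ}

lemma continuous (hφ : IsTestFun φ) : Continuous φ :=
  let ⟨⟨_, hK⟩, _⟩ := hφ
  hK.continuous

lemma hasCompactSupport_sq (hφ : IsTestFun φ) : HasCompactSupport fun x => φ x ^ 2 :=
  hφ.2.comp_left (g := fun t : ℝ => t ^ 2) (zero_pow two_ne_zero)

lemma integrable_sq (hφ : IsTestFun φ) : Integrable fun x => φ x ^ 2 :=
  (hφ.continuous.pow 2).integrable_of_hasCompactSupport hφ.hasCompactSupport_sq

lemma integrable_deriv_sq (hφ : IsTestFun φ) : Integrable fun x => deriv φ x ^ 2 := by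
  obtain ⟨⟨K, hK⟩, hcs⟩ := hφ
  refine (integrableOn_iff_integrable_of_support_subset fun x hx => ?_).1
    (Measure.integrableOn_of_bounded (M := (K : ℝ) ^ 2) (IsCompact.measure_lt_top hcs).ne
      ((measurable_deriv φ).pow_const 2).aestronglyMeasurable
      (Eventually.of_forall fun x => ?_))
  · exact support_deriv_subset (pow_ne_zero_iff two_ne_zero |>.1 hx)
  · rw [norm_pow]
    exact pow_le_pow_left₀ (norm_nonneg _) (norm_deriv_le_of_lipschitz hK) 2

end IsTestFun

noncomputable def quadDensity (p lam : ℝ) (W ρ u φ : ℝ → ℝ) (x : ℝ) : ℝ :=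
  deriv φ x ^ 2 + (W x + lam) * φ x ^ 2 - (p - 1) * ρ x * |u x| ^ (p - 2) * φ x ^ 2

section QuadDensity

variable {p lam : ℝ} {W ρ u φ ψ : ℝ → ℝ} {x : ℝ}

lemma quadForm_eq_integral_quadDensity :
    quadForm p lam W ρ u φ = ∫ x, quadDensity p lam W ρ u φ x := rfl

lemma quadDensity_congr (h : ψ =ᶠ[𝓝 x] φ) :
    quadDensity p lam W ρ u ψ x = quadDensity p lam W ρ u φ x := by
  rw [quadDensity, quadDensity, h.deriv_eq, h.eq_of_nhds]

lemma quadDensity_const_smul (a : ℝ) :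
    quadDensity p lam W ρ u (a • φ) x = a ^ 2 * quadDensity p lam W ρ u φ x := by
  simp only [quadDensity, deriv_const_smul_field, Pi.smul_apply, smul_eq_mul]
  ring

lemma quadDensity_eq_zero_of_notMem_tsupport (hx : x ∉ tsupport φ) :
    quadDensity p lam W ρ u φ x = 0 := by
  rw [quadDensity_congr (notMem_tsupport_iff_eventuallyEq.1 hx)]
  simp [quadDensity]

lemma quadDensity_sum_of_pairwise_disjoint {ι : Type*} [Fintype ι] {φ : ι → ℝ → ℝ}
    (hφ : Pairwise (Disjoint on fun i => tsupport (φ i))) (a : ι → ℝ) (x : ℝ) :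
    quadDensity p lam W ρ u (∑ i, a i • φ i) x =
      ∑ i, a i ^ 2 * quadDensity p lam W ρ u (φ i) x := by
  classical
  by_cases hx : ∃ i, x ∈ tsupport (φ i)
  · obtain ⟨i, hi⟩ := hx
    have hoff : ∀ j ≠ i, x ∉ tsupport (φ j) := fun j hji hj =>
      Set.disjoint_left.1 (hφ hji) hj hi
    have hnear : ∀ᶠ y in 𝓝 x, ∀ j ≠ i, φ j y = 0 := eventually_all.2 fun j => by
      by_cases hji : j = i
      · exact Eventually.of_forall fun _ h => absurd hji h
      · exact (notMem_tsupport_iff_eventuallyEq.1 (hoff j hji)).mono fun _ hy _ => hy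
    have hsum : (∑ j, a j • φ j) =ᶠ[𝓝 x] a i • φ i := by
      filter_upwards [hnear] with y hy
      simp only [Finset.sum_apply, Pi.smul_apply]
      exact Finset.sum_eq_single_of_mem i (Finset.mem_univ i) fun j _ hji => by
        rw [hy j hji, smul_zero]
    rw [quadDensity_congr hsum, quadDensity_const_smul]
    rw [Finset.sum_eq_single_of_mem i (Finset.mem_univ i) fun j _ hji => by
      rw [quadDensity_eq_zero_of_notMem_tsupport (hoff j hji), mul_zero]]
  · push Not at hx
    have hsum : (∑ j, a j • φ j) =ᶠ[𝓝 x] 0 := by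
      filter_upwards [eventually_all.2 fun j => notMem_tsupport_iff_eventuallyEq.1 (hx j)]
        with y hy
      simp [hy]
    rw [quadDensity_eq_zero_of_notMem_tsupport (notMem_tsupport_iff_eventuallyEq.2 hsum)]
    simp [quadDensity_eq_zero_of_notMem_tsupport (hx _)]

lemma quadForm_sum_of_pairwise_disjoint {ι : Type*} [Fintype ι] {φ : ι → ℝ → ℝ}
    (hφ : Pairwise (Disjoint on fun i => tsupport (φ i)))
    (hint : ∀ i, Integrable (quadDensity p lam W ρ u (φ i))) (a : ι → ℝ) :
    quadForm p lam W ρ u (∑ i, a i • φ i) = ∑ i, a i ^ 2 * quadForm p lam W ρ u (φ i) := by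
  simp only [quadForm_eq_integral_quadDensity, quadDensity_sum_of_pairwise_disjoint hφ,
    ← integral_const_mul]
  exact integral_finsetSum _ fun i _ => (hint i).const_mul _

lemma morseIndexGE_of_pairwise_disjoint {m : ℕ} {φ : Fin m → ℝ → ℝ}
    (htest : ∀ i, IsTestFun (φ i)) (hφ : Pairwise (Disjoint on fun i => tsupport (φ i)))
    (hneg : ∀ i, quadForm p lam W ρ u (φ i) < 0) :
    MorseIndexGE p lam W ρ u m := by
  -- A non-integrable function has Bochner integral `0`, so negativity forces integrability.
  have hint : ∀ i, Integrable (quadDensity p lam W ρ u (φ i)) := fun i =>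
    by_contra fun h => (hneg i).ne (integral_undef h)
  have hspan : ∀ c : Fin m → ℝ, c ≠ 0 → quadForm p lam W ρ u (∑ i, c i • φ i) < 0 := by
    intro c hc
    obtain ⟨i, hi⟩ := Function.ne_iff.1 hc
    rw [quadForm_sum_of_pairwise_disjoint hφ hint]
    refine Finset.sum_neg' (fun j _ => mul_nonpos_of_nonneg_of_nonpos (sq_nonneg _) (hneg j).le)
      ⟨i, Finset.mem_univ i, mul_neg_of_pos_of_neg (sq_pos_of_ne_zero hi) (hneg i)⟩
  refine ⟨φ, htest, Fintype.linearIndependent_iff.2 fun c hc i => ?_, fun c hc => ?_⟩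
  · by_contra hci
    have := hspan c (Function.ne_iff.2 ⟨i, hci⟩)
    rw [hc] at this
    simp [quadForm] at this
  · exact hspan c fun h => hc (by simp [h])

lemma integrable_quadDensity (hp : 2 ≤ p) (hW : Measurable W) (hρ : Measurable ρ) {C : ℝ}
    (hC : ∀ᵐ x, |W x| ≤ C ∧ |ρ x| ≤ C) (hu : Continuous u) (hφ : IsTestFun φ) :
    Integrable (quadDensity p lam W ρ u φ) := by
  have hnonlin : Continuous fun x => (p - 1) * |u x| ^ (p - 2) * φ x ^ 2 :=
    (continuous_const.mul ((Real.continuous_rpow_const (by linarith)).comp hu.abs)).mul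
      (hφ.continuous.pow 2)
  have hlin_int : Integrable fun x => (W x + lam) * φ x ^ 2 :=
    hφ.integrable_sq.bdd_mul (hW.add_const lam).aestronglyMeasurable (c := C + |lam|)
      (hC.mono fun x hx => (norm_add_le _ _).trans (by simp [hx.1]))
  have hnonlin_int : Integrable fun x => ρ x * ((p - 1) * |u x| ^ (p - 2) * φ x ^ 2) :=
    (hnonlin.integrable_of_hasCompactSupport hφ.hasCompactSupport_sq.mul_left).bdd_mul
      hρ.aestronglyMeasurable (hC.mono fun x hx => hx.2)
  convert (hφ.integrable_deriv_sq.add hlin_int).sub hnonlin_int using 1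
  ext x
  simp only [quadDensity, Pi.add_apply, Pi.sub_apply]
  ring

lemma quadForm_le_of_le_neg (hp : 1 ≤ p) (hρ : ∀ᵐ x, 0 ≤ ρ x) (hφ : IsTestFun φ)
    (hint : Integrable (quadDensity p lam W ρ u φ)) {δ : ℝ}
    (hW : ∀ᵐ x, x ∈ tsupport φ → W x + lam ≤ -δ) :
    quadForm p lam W ρ u φ ≤ (∫ x, deriv φ x ^ 2) - δ * ∫ x, φ x ^ 2 := by
  rw [quadForm_eq_integral_quadDensity, ← integral_const_mul,
    ← integral_sub hφ.integrable_deriv_sq (hφ.integrable_sq.const_mul δ)]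
  refine integral_mono_ae hint (hφ.integrable_deriv_sq.sub (hφ.integrable_sq.const_mul δ)) ?_
  filter_upwards [hρ, hW] with x hρx hWx
  have hnonlin : 0 ≤ (p - 1) * ρ x * |u x| ^ (p - 2) * φ x ^ 2 :=
    mul_nonneg (mul_nonneg (mul_nonneg (by linarith) hρx) (by positivity)) (sq_nonneg _)
  have hlin : (W x + lam) * φ x ^ 2 ≤ -δ * φ x ^ 2 := by
    by_cases hx : x ∈ tsupport φ
    · exact mul_le_mul_of_nonneg_right (hWx hx) (sq_nonneg _)
    · simp [image_eq_zero_of_notMem_tsupport hx]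
  simp only [quadDensity]
  linarith

end QuadDensity

noncomputable def tent (c r x : ℝ) : ℝ := max (1 - |x - c| / r) 0

section Tent

variable {c r : ℝ}

lemma tsupport_tent_subset (hr : 0 < r) : tsupport (tent c r) ⊆ Icc (c - r) (c + r) := by
  refine closure_minimal (fun x hx => ?_) isClosed_Icc
  have hlt : |x - c| < r := by
    by_contra! hle
    exact hx (max_eq_right (by rw [sub_nonpos, one_le_div hr]; exact hle))
  rw [abs_sub_lt_iff] at hlt
  constructor <;> linarith

lemma lipschitzWith_tent (hr : 0 < r) : LipschitzWith (Real.toNNReal r⁻¹) (tent c r) := by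
  refine LipschitzWith.of_dist_le_mul fun x y => ?_
  rw [Real.dist_eq, Real.dist_eq, Real.coe_toNNReal _ (inv_nonneg.2 hr.le)]
  calc |tent c r x - tent c r y| ≤ |(1 - |x - c| / r) - (1 - |y - c| / r)| :=
        abs_max_sub_max_le_abs _ _ _
    _ = r⁻¹ * |(|y - c| - |x - c|)| := by
        rw [show (1 - |x - c| / r) - (1 - |y - c| / r) = r⁻¹ * (|y - c| - |x - c|) by ring,
          abs_mul, abs_of_pos (inv_pos.2 hr)]
    _ ≤ r⁻¹ * |(y - c) - (x - c)| :=
        mul_le_mul_of_nonneg_left (abs_abs_sub_abs_le_abs_sub _ _) (inv_nonneg.2 hr.le)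
    _ = r⁻¹ * |x - y| := by rw [sub_sub_sub_cancel_right, abs_sub_comm]

lemma isTestFun_tent (hr : 0 < r) : IsTestFun (tent c r) :=
  ⟨⟨_, lipschitzWith_tent hr⟩,
    isCompact_Icc.of_isClosed_subset (isClosed_tsupport _) (tsupport_tent_subset hr)⟩

lemma integral_deriv_tent_sq_le (hr : 0 < r) : ∫ x, deriv (tent c r) x ^ 2 ≤ 2 / r := by
  have hout : ∀ x ∉ Icc (c - r) (c + r), deriv (tent c r) x ^ 2 = 0 := fun x hx => by
    rw [notMem_support.1 fun h => hx (tsupport_tent_subset hr (support_deriv_subset h)),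
      zero_pow two_ne_zero]
  have hbound : ∀ x ∈ Icc (c - r) (c + r), ‖deriv (tent c r) x ^ 2‖ ≤ r⁻¹ ^ 2 := fun x _ => by
    rw [norm_pow]
    refine pow_le_pow_left₀ (norm_nonneg _) ?_ 2
    exact (norm_deriv_le_of_lipschitz (lipschitzWith_tent hr)).trans_eq
      (Real.coe_toNNReal _ (inv_nonneg.2 hr.le))
  calc ∫ x, deriv (tent c r) x ^ 2
      = ∫ x in Icc (c - r) (c + r), deriv (tent c r) x ^ 2 :=
        (setIntegral_eq_integral_of_forall_compl_eq_zero hout).symm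
    _ ≤ ‖∫ x in Icc (c - r) (c + r), deriv (tent c r) x ^ 2‖ := Real.le_norm_self _
    _ ≤ r⁻¹ ^ 2 * volume.real (Icc (c - r) (c + r)) :=
        norm_setIntegral_le_of_norm_le_const measure_Icc_lt_top hbound
    _ = 2 / r := by
        rw [Real.volume_real_Icc_of_le (by linarith)]
        field_simp
        ring

lemma le_integral_tent_sq (hr : 0 < r) : r / 4 ≤ ∫ x, tent c r x ^ 2 := by
  have hcore : ∀ x ∈ Icc (c - r / 2) (c + r / 2), 1 / 4 ≤ tent c r x ^ 2 := fun x hx => by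
    have hdist : |x - c| ≤ r / 2 := abs_sub_le_iff.2 ⟨by linarith [hx.2], by linarith [hx.1]⟩
    have hhalf : 1 / 2 ≤ tent c r x :=
      le_max_of_le_left (by rw [le_sub_comm, div_le_iff₀ hr]; linarith)
    nlinarith
  calc r / 4 = volume.real (Icc (c - r / 2) (c + r / 2)) • (1 / 4 : ℝ) := by
        rw [Real.volume_real_Icc_of_le (by linarith), smul_eq_mul]
        ring
    _ ≤ ∫ x in Icc (c - r / 2) (c + r / 2), tent c r x ^ 2 :=
        setIntegral_ge_of_const_le measurableSet_Icc measure_Icc_lt_top.ne hcore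
          (isTestFun_tent hr).integrable_sq.integrableOn
    _ ≤ ∫ x, tent c r x ^ 2 :=
        setIntegral_le_integral (isTestFun_tent hr).integrable_sq
          (Eventually.of_forall fun x => sq_nonneg (tent c r x))

end Tent

section Morse

variable {p lam : ℝ} {W ρ u : ℝ → ℝ}

lemma quadForm_tent_neg (hp : 2 ≤ p) (hWm : Measurable W) (hρm : Measurable ρ) {C : ℝ}
    (hC : ∀ᵐ x, |W x| ≤ C ∧ |ρ x| ≤ C) (hρ : ∀ᵐ x, 0 ≤ ρ x) (hu : Continuous u) {c r δ : ℝ}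
    (hr : 0 < r) (hδr : 8 < δ * r ^ 2) (hW : ∀ᵐ x, x ∈ Icc (c - r) (c + r) → W x + lam ≤ -δ) :
    quadForm p lam W ρ u (tent c r) < 0 := by
  have hδ : 0 < δ := by nlinarith [sq_nonneg r]
  have hQ := quadForm_le_of_le_neg (by linarith) hρ (isTestFun_tent hr)
    (integrable_quadDensity hp hWm hρm hC hu (isTestFun_tent hr))
    (hW.mono fun x hx hxs => hx (tsupport_tent_subset hr hxs))
  have hkin := integral_deriv_tent_sq_le (c := c) hr
  have hmass := mul_le_mul_of_nonneg_left (le_integral_tent_sq (c := c) hr) hδ.le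
  have hbal : 2 / r < δ * (r / 4) := by
    rw [div_lt_iff₀ hr]
    nlinarith
  linarith

lemma morseIndexGE_of_forall_exists_Icc (hp : 2 ≤ p) (hWm : Measurable W) (hρm : Measurable ρ)
    {C : ℝ} (hC : ∀ᵐ x, |W x| ≤ C ∧ |ρ x| ≤ C) (hρ : ∀ᵐ x, 0 ≤ ρ x) (hu : Continuous u)
    {δ : ℝ} (hδ : 0 < δ) (hlong : ∀ L, ∃ a, ∀ᵐ x, x ∈ Icc a (a + L) → W x + lam ≤ -δ)
    (m : ℕ) : MorseIndexGE p lam W ρ u m := by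
  set r := 3 / √δ
  have hr : 0 < r := by positivity
  have hδr : 8 < δ * r ^ 2 := by
    rw [div_pow, Real.sq_sqrt hδ.le, mul_div_cancel₀ _ hδ.ne']
    norm_num
  obtain ⟨a, ha⟩ := hlong (3 * r * m)
  set center : Fin m → ℝ := fun i => a + r + 3 * r * (i : ℕ)
  refine morseIndexGE_of_pairwise_disjoint (φ := fun i => tent (center i) r)
    (fun _ => isTestFun_tent hr) ?_ fun i => quadForm_tent_neg hp hWm hρm hC hρ hu hr hδr
      (ha.mono fun x hx hxi => hx ?_)
  · refine (pairwise_disjoint_on _).2 fun i j hij => Set.disjoint_left.2 fun x hxi hxj => ?_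
    have hij' : ((i : ℕ) : ℝ) + 1 ≤ (j : ℕ) := by exact_mod_cast hij
    have hxi' := tsupport_tent_subset hr hxi
    have hxj' := tsupport_tent_subset hr hxj
    simp only [mem_Icc, center] at hxi' hxj'
    nlinarith
  · have him : ((i : ℕ) : ℝ) + 1 ≤ m := by exact_mod_cast i.isLt
    simp only [mem_Icc, center] at hxi ⊢
    constructor <;> nlinarith

lemma neg_limsup_le_of_not_morseIndexGE {l : Filter ℝ}
    (hl : ∀ s ∈ l, ∀ L, ∃ a, Icc a (a + L) ⊆ s) (hp : 2 ≤ p) (hWm : Measurable W)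
    (hρm : Measurable ρ) {C : ℝ} (hC : ∀ᵐ x, |W x| ≤ C ∧ |ρ x| ≤ C) (hρ : ∀ᵐ x, 0 ≤ ρ x)
    (hu : Continuous u) {m : ℕ} (hm : ¬ MorseIndexGE p lam W ρ u m) :
    -limsup W (l ⊓ ae volume) ≤ lam := by
  by_contra! hlt
  set δ := (-lam - limsup W (l ⊓ ae volume)) / 2
  have hδ : 0 < δ := by simp only [δ]; linarith
  have hbdd : IsBoundedUnder (· ≤ ·) (l ⊓ ae volume) W :=
    ⟨C, eventually_map.2 <| (hC.filter_mono inf_le_right).mono fun x hx =>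
      (le_abs_self _).trans hx.1⟩
  have hev : ∀ᶠ x in l ⊓ ae volume, W x < -lam - δ :=
    eventually_lt_of_limsup_lt (by simp only [δ]; linarith) hbdd
  obtain ⟨s, hs, t, ht, hst⟩ := eventually_inf.1 hev
  refine hm (morseIndexGE_of_forall_exists_Icc hp hWm hρm hC hρ hu hδ (fun L => ?_) m)
  obtain ⟨a, ha⟩ := hl s hs L
  refine ⟨a, (show ∀ᵐ x, x ∈ t from ht).mono fun x hxt hx => ?_⟩
  have hWx : W x < -lam - δ := hst x ⟨ha hx, hxt⟩
  linarith

end Morse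

theorem stmt_18_general (p lam : ℝ) (hp : 2 < p) (W ρ : ℝ → ℝ)
    (hWmeas : Measurable W) (hρmeas : Measurable ρ)
    (hbdd : ∃ C : ℝ, ∀ᵐ x ∂(volume : Measure ℝ), |W x| ≤ C ∧ |ρ x| ≤ C)
    (hρ : ∀ᵐ x ∂(volume : Measure ℝ), 0 ≤ ρ x)
    (u u' : ℝ → ℝ)
    (hu : ∀ x, HasDerivAt u (u' x) x)
    (hfin : ∃ m : ℕ, ¬ MorseIndexGE p lam W ρ u (m + 1)) :
    -(Filter.limsup W (Filter.atTop ⊓ MeasureTheory.ae volume)) ≤ lam ∧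
    -(Filter.limsup W (Filter.atBot ⊓ MeasureTheory.ae volume)) ≤ lam := by
  obtain ⟨C, hC⟩ := hbdd
  obtain ⟨m, hm⟩ := hfin
  have hu_cont : Continuous u := continuous_iff_continuousAt.2 fun x => (hu x).continuousAt
  constructor
  · refine neg_limsup_le_of_not_morseIndexGE (fun s hs L => ?_) hp.le hWmeas hρmeas hC hρ
      hu_cont hm
    obtain ⟨R, hR⟩ := mem_atTop_sets.1 hs
    exact ⟨R, fun x hx => hR x hx.1⟩
  · refine neg_limsup_le_of_not_morseIndexGE (fun s hs L => ?_) hp.le hWmeas hρmeas hC hρ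
      hu_cont hm
    obtain ⟨R, hR⟩ := mem_atBot_sets.1 hs
    exact ⟨R - L, fun x hx => hR x (by linarith [hx.2])⟩

/-- Lower bound on `λ` for finite Morse index `H¹` solutions of
`−u″ + W u + λ u = ρ |u|^{p−2} u` on the real line: `λ ≥ −L⁺` and
`λ ≥ −L⁻`, where `L^±` is the essential limsup of `W` at `±∞`. -/
theorem stmt_18 (p lam : ℝ) (hp : 2 < p) (W ρ : ℝ → ℝ)
    (hWmeas : Measurable W) (hρmeas : Measurable ρ)
    (hbdd : ∃ C : ℝ, ∀ᵐ x ∂(volume : Measure ℝ), |W x| ≤ C ∧ |ρ x| ≤ C)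
    (hρ : ∀ᵐ x ∂(volume : Measure ℝ), 0 ≤ ρ x)
    (u u' u'' : ℝ → ℝ)
    (hu : ∀ x, HasDerivAt u (u' x) x)
    (hu'cont : Continuous u') (hu'lip : LocallyLipschitz u')
    (hu'' : ∀ᵐ x ∂(volume : Measure ℝ), HasDerivAt u' (u'' x) x)
    (huL2 : Integrable (fun x : ℝ => (u x) ^ 2))
    (hu'L2 : Integrable (fun x : ℝ => (u' x) ^ 2))
    (heq : ∀ᵐ x ∂(volume : Measure ℝ),
      -u'' x + W x * u x + lam * u x = ρ x * (|u x| ^ (p - 2) * u x))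
    (hfin : ∃ m : ℕ, ¬ MorseIndexGE p lam W ρ u (m + 1)) :
    -(Filter.limsup W (Filter.atTop ⊓ MeasureTheory.ae volume)) ≤ lam ∧
    -(Filter.limsup W (Filter.atBot ⊓ MeasureTheory.ae volume)) ≤ lam :=
  stmt_18_general p lam hp W ρ hWmeas hρmeas hbdd hρ u u' hu hfin
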